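/- Let V be a finite type of values, n a natural number, a : Fin n → V an assignment, and m : V → ℕ with ∑_{d ∈ V} m d = n. Then the minimum of hammingDist(a,b) over all assignments b : Fin n → V with count(b,d) = m d for every d ∈ V equals ∑_{d ∈ V} max( count(a,d) − m d, 0 ). -/
import Mathlib

open Finset

section Aux

variable {V : Type*} [Fintype V] [DecidableEq V] {n : ℕ}

private lemma cnt_sum (a : Fin n → V) :
    ∑ d, (univ.filter fun i => a i = d).card = n := by
  have h := Finset.card_eq_sum_card_fiberwise
    (s := (univ : Finset (Fin n))) (t := (univ : Finset V)) (f := a)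
    (fun i _ => Finset.mem_univ (a i))
  simpa using h.symm

private lemma cnt_update (a : Fin n → V) (i : Fin n) (v d : V) :
    (univ.filter fun j => Function.update a i v j = d).card
      + (if a i = d then 1 else 0)
    = (univ.filter fun j => a j = d).card + (if v = d then 1 else 0) := by
  classical
  simp only [Finset.card_filter]
  have h1 : ∀ f : Fin n → ℕ, ∑ j, f j = ∑ j ∈ univ.erase i, f j + f i :=
    fun f => (Finset.sum_erase_add univ f (Finset.mem_univ i)).symm
  rw [h1 (fun j => if Function.update a i v j = d then 1 else 0),
    h1 (fun j => if a j = d then 1 else 0)]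
  have hcong : ∑ j ∈ univ.erase i, (if Function.update a i v j = d then (1:ℕ) else 0)
      = ∑ j ∈ univ.erase i, (if a j = d then (1:ℕ) else 0) := by
    refine Finset.sum_congr rfl fun j hj => ?_
    rw [Function.update_of_ne (Finset.mem_erase.mp hj).1]
  rw [hcong, Function.update_self, add_assoc, add_assoc]
  ring

private lemma lower_bound (a b : Fin n → V) (m : V → ℕ)
    (hb : ∀ d, (univ.filter fun i => b i = d).card = m d) :
    ∑ d, ((univ.filter fun i => a i = d).card - m d) ≤ hammingDist a b := by
  classical
  rw [hammingDist]
  rw [Finset.card_eq_sum_card_fiberwise (f := a) (t := univ)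
    (fun i _ => Finset.mem_univ (a i))]
  refine Finset.sum_le_sum fun d _ => ?_
  rw [tsub_le_iff_right]
  have hsplit := Finset.card_filter_add_card_filter_not
    (s := univ.filter fun i => a i = d) (p := fun i => a i = b i)
  have h1 : ((univ.filter fun i => a i = d).filter fun i => a i = b i).card ≤ m d := by
    rw [← hb d]
    refine Finset.card_le_card fun i hi => ?_
    simp only [Finset.mem_filter, Finset.mem_univ, true_and] at hi ⊢
    rw [← hi.2, hi.1]
  have h2 : ((univ.filter fun i => a i = d).filter fun i => ¬ a i = b i)
      = (({i | a i ≠ b i} : Finset (Fin n)).filter fun i => a i = d) := by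
    ext i
    simp only [Finset.mem_filter, Finset.mem_univ, true_and, ne_eq]
    tauto
  calc (univ.filter fun i => a i = d).card
      = ((univ.filter fun i => a i = d).filter fun i => a i = b i).card
        + ((univ.filter fun i => a i = d).filter fun i => ¬ a i = b i).card := hsplit.symm
    _ ≤ (({i | a i ≠ b i} : Finset (Fin n)).filter fun i => a i = d).card + m d := by
        rw [h2]; omega

private lemma exists_close (m : V → ℕ) (hm : ∑ d, m d = n) :
    ∀ (k : ℕ) (a : Fin n → V),
      (∑ d, ((univ.filter fun i => a i = d).card - m d)) = k →
      ∃ b : Fin n → V,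
        (∀ d, (univ.filter fun i => b i = d).card = m d) ∧ hammingDist a b ≤ k := by
  classical
  intro k
  induction k with
  | zero =>
    intro a ha
    refine ⟨a, fun d => ?_, by simp⟩
    have hle : ∀ d ∈ (univ : Finset V),
        (univ.filter fun i => a i = d).card ≤ m d := by
      intro d _
      have := Finset.sum_eq_zero_iff.mp ha d (Finset.mem_univ d)
      omega
    by_contra hne
    have hlt : (univ.filter fun i => a i = d).card < m d :=
      lt_of_le_of_ne (hle d (Finset.mem_univ d)) hne
    have := Finset.sum_lt_sum hle ⟨d, Finset.mem_univ d, hlt⟩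
    rw [cnt_sum, hm] at this
    exact lt_irrefl _ this
  | succ k ih =>
    intro a ha
    -- find surplus value d0
    have hd0 : ∃ d0, m d0 < (univ.filter fun i => a i = d0).card := by
      by_contra h
      push_neg at h
      have : ∀ d ∈ (univ : Finset V),
          ((univ.filter fun i => a i = d).card - m d) = 0 := by
        intro d _; have := h d; omega
      rw [Finset.sum_eq_zero this] at ha
      exact Nat.succ_ne_zero k ha.symm
    obtain ⟨d0, hd0⟩ := hd0
    -- find deficit value d1
    have hd1 : ∃ d1, (univ.filter fun i => a i = d1).card < m d1 := by
      by_contra h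
      push_neg at h
      have hsum : ∑ d, ((univ.filter fun i => a i = d).card - m d)
          + ∑ d, m d = ∑ d, (univ.filter fun i => a i = d).card := by
        rw [← Finset.sum_add_distrib]
        exact Finset.sum_congr rfl fun d _ => Nat.sub_add_cancel (h d)
      rw [ha, hm, cnt_sum] at hsum
      omega
    obtain ⟨d1, hd1⟩ := hd1
    have hne01 : d1 ≠ d0 := by
      intro h; rw [h] at hd1; omega
    -- pick an index with a i = d0
    have hpos : 0 < (univ.filter fun i => a i = d0).card := by omega
    obtain ⟨i, hi⟩ := Finset.card_pos.mp hpos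
    have hai : a i = d0 := (Finset.mem_filter.mp hi).2
    set a' := Function.update a i d1 with ha'
    -- counts of a'
    have hc0 : (univ.filter fun j => a' j = d0).card + 1
        = (univ.filter fun j => a j = d0).card := by
      have := cnt_update a i d1 d0
      rw [hai] at this
      simpa [hne01] using this
    have hc1 : (univ.filter fun j => a' j = d1).card
        = (univ.filter fun j => a j = d1).card + 1 := by
      have := cnt_update a i d1 d1
      rw [hai] at this
      simpa [hne01.symm ∘ Eq.symm, (Ne.symm hne01 : d0 ≠ d1)] using this
    have hcother : ∀ d, d ≠ d0 → d ≠ d1 →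
        (univ.filter fun j => a' j = d).card = (univ.filter fun j => a j = d).card := by
      intro d h0 h1
      have := cnt_update a i d1 d
      rw [hai] at this
      simpa [Ne.symm h0, Ne.symm h1] using this
    -- new sum is k
    have hsum' : ∑ d, ((univ.filter fun i => a' i = d).card - m d) = k := by
      have key : ∀ d ∈ (univ : Finset V), d ≠ d0 →
          ((univ.filter fun i => a' i = d).card - m d)
            = ((univ.filter fun i => a i = d).card - m d) := by
        intro d _ hd
        by_cases h1 : d = d1
        · subst h1
          rw [hc1]
          omega
        · rw [hcother d hd h1]
      have e1 : ∑ d, ((univ.filter fun i => a' i = d).card - m d)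
          = ((univ.filter fun i => a' i = d0).card - m d0)
            + ∑ d ∈ univ.erase d0, ((univ.filter fun i => a' i = d).card - m d) :=
        (Finset.add_sum_erase _ _ (Finset.mem_univ d0)).symm
      have e2 : ∑ d, ((univ.filter fun i => a i = d).card - m d)
          = ((univ.filter fun i => a i = d0).card - m d0)
            + ∑ d ∈ univ.erase d0, ((univ.filter fun i => a i = d).card - m d) :=
        (Finset.add_sum_erase _ _ (Finset.mem_univ d0)).symm
      have he : ∑ d ∈ univ.erase d0, ((univ.filter fun i => a' i = d).card - m d)
          = ∑ d ∈ univ.erase d0, ((univ.filter fun i => a i = d).card - m d) := by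
        refine Finset.sum_congr rfl fun d hd => ?_
        exact key d (Finset.mem_univ d) (Finset.mem_erase.mp hd).1
      have ht : ((univ.filter fun i => a' i = d0).card - m d0) + 1
          = ((univ.filter fun i => a i = d0).card - m d0) := by
        omega
      omega
    obtain ⟨b, hbcnt, hbd⟩ := ih a' hsum'
    refine ⟨b, hbcnt, ?_⟩
    have htri := hammingDist_triangle a a' b
    have hstep : hammingDist a a' ≤ 1 := by
      rw [hammingDist]
      calc ({j | a j ≠ a' j} : Finset (Fin n)).card ≤ ({i} : Finset (Fin n)).card := by
            refine Finset.card_le_card fun j hj => ?_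
            simp only [ne_eq, Finset.mem_filter, Finset.mem_univ, true_and] at hj
            simp only [Finset.mem_singleton]
            by_contra hji
            exact hj (by rw [ha', Function.update_of_ne hji])
        _ = 1 := Finset.card_singleton i
    omega

end Aux

/-- Given target multiplicities `m` with `∑ m d = n`, the minimum Hamming
distance from `a` to an assignment `b` with `count(b,d) = m d` for all `d` equals
`∑_d max(count(a,d) − m d, 0)`. -/
theorem min_hamming_to_prescribed_counts
    (V : Type*) [Fintype V] [DecidableEq V] (n : ℕ)
    (a : Fin n → V) (m : V → ℕ) (hm : ∑ d, m d = n) :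
    IsLeast
      {k : ℕ | ∃ b : Fin n → V,
        (∀ d, (univ.filter fun i => b i = d).card = m d) ∧
        hammingDist a b = k}
      (∑ d, ((univ.filter fun i => a i = d).card - m d)) := by
  constructor
  · obtain ⟨b, hbcnt, hbd⟩ := exists_close m hm
      (∑ d, ((univ.filter fun i => a i = d).card - m d)) a rfl
    have hlb := lower_bound a b m hbcnt
    exact ⟨b, hbcnt, le_antisymm hbd hlb⟩
  · rintro k ⟨b, hbcnt, rfl⟩
    exact lower_bound a b m hbcnt
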